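/- The maps ι(r) : W → W ⊗ V and τ(r) : W ⊗ V → W form an exact sequence of vector spaces: ι(r) is injective, τ(r) is surjective, and the image of ι(r) equals the kernel of τ(r). -/

import Mathlib

noncomputable section

open Finsupp Matrix

/-- The infinite-dimensional space `W = ⊕_{j≥0} ℂ w^j`. -/
abbrev Wsp : Type := ℕ →₀ ℂ

abbrev EndW : Type := Module.End ℂ Wsp

/-- The basis vector `w^j`. -/
def wv (j : ℕ) : Wsp := Finsupp.single j 1

/-- The linear operator on `W` determined by its values on the basis. -/
def mkOp (g : ℕ → Wsp) : EndW :=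
  Finsupp.lsum ℂ fun j => LinearMap.toSpanSingleton ℂ Wsp (g j)

/-- The annihilation operator `a`. -/
def opA : EndW := mkOp fun j => match j with | 0 => 0 | i + 1 => wv i

/-- The creation operator `a†`. -/
def opAdag (q : ℂ) : EndW := mkOp fun j => (1 - q ^ (2 * (j + 1))) • wv (j + 1)

/-- The diagonal operator `f(D)`. -/
def opDiag (f : ℕ → ℂ) : EndW := mkOp fun j => f j • wv j

/-- The components of the fusion intertwiner `ι(r) : W → W ⊗ V`,
`ι(r)(w^j) = (q^{-j-1} - q^{j+1}) w^{j+1} ⊗ v⁰ + q^{j+1} r w^j ⊗ v¹`. -/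
def iotaC (q r : ℂ) : Fin 2 → EndW :=
  ![mkOp fun j => ((q⁻¹) ^ (j + 1) - q ^ (j + 1)) • wv (j + 1),
    opDiag fun j => q ^ (j + 1) * r]

/-- The components of the fusion intertwiner `τ(r) : W ⊗ V → W`,
`τ(r)(w^j ⊗ v⁰) = q^j w^j`, `τ(r)(w^j ⊗ v¹) = (q^{j+1} - q^{-j-1}) r⁻¹ w^{j+1}`. -/
def tauC (q r : ℂ) : Fin 2 → EndW :=
  ![opDiag fun j => q ^ j,
    mkOp fun j => ((q ^ (j + 1) - (q⁻¹) ^ (j + 1)) * r⁻¹) • wv (j + 1)]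

/-- `ι(r)` as a linear map `W → W ⊗ V`, identifying `W ⊗ V ≅ W × W` via the basis
`(v⁰, v¹)` of `V`. -/
def iotaL (q r : ℂ) : Wsp →ₗ[ℂ] Wsp × Wsp :=
  LinearMap.prod (iotaC q r 0) (iotaC q r 1)

/-- `τ(r)` as a linear map `W ⊗ V → W`. -/
def tauL (q r : ℂ) : Wsp × Wsp →ₗ[ℂ] Wsp :=
  LinearMap.coprod (tauC q r 0) (tauC q r 1)

/-! In the basis `(v⁰, v¹)`, the `v¹`-component of `ι(r)` and the `v⁰`-component of `τ(r)` are
diagonal with nonzero entries, hence invertible, and `τ(r) ∘ ι(r) = 0`. Exactness of such a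
block sequence is then formal: if `τ(x, y) = 0`, write `y = ι₁ z`; then
`τ₀ x = -τ₁ y = τ₀ (ι₀ z)`, and injectivity of `τ₀` gives `(x, y) = ι z`. -/

theorem LinearMap.exact_prod_coprod {R M N P : Type*} [Ring R] [AddCommGroup M] [AddCommGroup N]
    [AddCommGroup P] [Module R M] [Module R N] [Module R P] (a₀ a₁ : M →ₗ[R] N)
    (t₀ t₁ : N →ₗ[R] P) (ha₁ : Function.Surjective a₁) (ht₀ : Function.Injective t₀)
    (h : t₀ ∘ₗ a₀ + t₁ ∘ₗ a₁ = 0) :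
    Function.Exact (a₀.prod a₁) (t₀.coprod t₁) := by
  have hz (z : M) : t₀ (a₀ z) + t₁ (a₁ z) = 0 := by simpa using LinearMap.congr_fun h z
  rintro ⟨x, y⟩
  constructor
  · intro hxy
    obtain ⟨z, rfl⟩ := ha₁ y
    refine ⟨z, Prod.ext (ht₀ ?_) rfl⟩
    change t₀ x + t₁ (a₁ z) = 0 at hxy
    change t₀ (a₀ z) = t₀ x
    rw [eq_neg_of_add_eq_zero_left (hz z), eq_neg_of_add_eq_zero_left hxy]
  · rintro ⟨z, hzxy⟩
    rw [← hzxy]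
    exact hz z

lemma wsp_hom_ext {M : Type*} [AddCommGroup M] [Module ℂ M] {f g : Wsp →ₗ[ℂ] M}
    (h : ∀ j, f (wv j) = g (wv j)) : f = g :=
  Finsupp.basisSingleOne.ext h

lemma mkOp_wv (g : ℕ → Wsp) (j : ℕ) : mkOp g (wv j) = g j := by
  simp [mkOp, wv]

lemma opDiag_mul_opDiag (f g : ℕ → ℂ) : opDiag f * opDiag g = opDiag (f * g) :=
  wsp_hom_ext fun j => by simp [opDiag, mkOp_wv, smul_smul, mul_comm]

lemma opDiag_one : opDiag 1 = 1 :=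
  wsp_hom_ext fun j => by simp [opDiag, mkOp_wv]

lemma bijective_opDiag {f : ℕ → ℂ} (hf : ∀ j, f j ≠ 0) : Function.Bijective (opDiag f) := by
  have hinv : f * f⁻¹ = 1 := funext fun j => mul_inv_cancel₀ (hf j)
  refine Function.bijective_iff_has_inverse.mpr ⟨opDiag f⁻¹, fun x => ?_, fun x => ?_⟩
  · rw [← Module.End.mul_apply, opDiag_mul_opDiag, mul_comm, hinv, opDiag_one, Module.End.one_apply]
  · rw [← Module.End.mul_apply, opDiag_mul_opDiag, hinv, opDiag_one, Module.End.one_apply]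

lemma tauC_comp_iotaC_add (q r : ℂ) (hr : r ≠ 0) :
    tauC q r 0 ∘ₗ iotaC q r 0 + tauC q r 1 ∘ₗ iotaC q r 1 = 0 :=
  wsp_hom_ext fun j => by
    simp only [LinearMap.add_apply, LinearMap.comp_apply, tauC, iotaC, cons_val_zero,
      cons_val_one, opDiag, mkOp_wv, map_smul, smul_smul, ← add_smul, LinearMap.zero_apply]
    rw [smul_eq_zero_of_left]
    field_simp
    ring

theorem iota_tau_exact_general (q r : ℂ) (hq0 : q ≠ 0) (hr : r ≠ 0) :
    Function.Injective (iotaL q r) ∧ Function.Surjective (tauL q r) ∧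
    LinearMap.range (iotaL q r) = LinearMap.ker (tauL q r) := by
  have hι₁ : Function.Bijective (iotaC q r 1) :=
    bijective_opDiag fun j => mul_ne_zero (pow_ne_zero _ hq0) hr
  have hτ₀ : Function.Bijective (tauC q r 0) := bijective_opDiag fun j => pow_ne_zero _ hq0
  refine ⟨fun x y hxy => hι₁.injective (congrArg Prod.snd hxy), fun w => ?_, ?_⟩
  · obtain ⟨x, rfl⟩ := hτ₀.surjective w
    exact ⟨(x, 0), by simp [tauL]⟩
  · exact ((LinearMap.exact_prod_coprod _ _ _ _ hι₁.surjective hτ₀.injective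
      (tauC_comp_iotaC_add q r hr)).linearMap_ker_eq).symm

/-- `ι(r)` is injective, `τ(r)` is surjective, and the image of `ι(r)`
equals the kernel of `τ(r)`. -/
theorem iota_tau_exact (q r : ℂ) (hq0 : q ≠ 0) (hq : ∀ n : ℕ, 0 < n → q ^ n ≠ 1)
    (hr : r ≠ 0) :
    Function.Injective (iotaL q r) ∧ Function.Surjective (tauL q r) ∧
    LinearMap.range (iotaL q r) = LinearMap.ker (tauL q r) :=
  iota_tau_exact_general q r hq0 hr
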